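/- Let g : ℝ^n → ℝ^n be C² near x* with g(x*) = x* and J_g(x*) = 0, and let μ(x*) ∈ ℝ^n_{≥0} be defined componentwise by: [μ(x*)]_j = 0 if λ_min(∇²g_j(x*)) < 0 < λ_max(∇²g_j(x*)), [μ(x*)]_j = λ_min(∇²g_j(x*)) if λ_min(∇²g_j(x*)) ≥ 0, and [μ(x*)]_j = |λ_max(∇²g_j(x*))| if λ_max(∇²g_j(x*)) ≤ 0. If the asymptotic error constant λ = lim_{k→∞}‖x^{k+1} − x*‖/‖x^k − x*‖² exists for the iteration x^{k+1} = g(x^k) with x^k → x*, x^k ≠ x*, then (1/2)‖μ(x*)‖ ≤ λ ≤ (1/2)√(Σ_j ‖∇²g_j(x*)‖²). -/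

import Mathlib

open Filter Metric

private lemma taylor2' {E F : Type*} [NormedAddCommGroup E] [NormedSpace ℝ E]
    [NormedAddCommGroup F] [NormedSpace ℝ F] {g : E → F} {x₀ : E} {r : ℝ}
    (hr : 0 < r) (hg : ContDiffOn ℝ 2 g (Metric.ball x₀ r)) :
    (fun h : E => g (x₀ + h) - g x₀ - fderiv ℝ g x₀ h
        - (2⁻¹ : ℝ) • fderiv ℝ (fderiv ℝ g) x₀ h h) =o[nhds 0] (fun h => ‖h‖ ^ 2) := by
  set f' : E → E →L[ℝ] F := fderiv ℝ g with hf'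
  set B := fderiv ℝ (fderiv ℝ g) x₀ with hB
  have hx₀ : x₀ ∈ ball x₀ r := mem_ball_self hr
  have hball : ball x₀ r ∈ nhds x₀ := isOpen_ball.mem_nhds hx₀
  have hdiff : ∀ y ∈ ball x₀ r, HasFDerivAt g (f' y) y := by
    intro y hy
    exact ((hg.differentiableOn (by norm_num)).differentiableAt
      (isOpen_ball.mem_nhds hy)).hasFDerivAt
  have hBd : HasFDerivAt f' B x₀ := by
    have h2 : ContDiffAt ℝ 2 g x₀ := hg.contDiffAt hball
    have h1 : ContDiffAt ℝ 1 (fderiv ℝ g) x₀ := h2.fderiv_right (by norm_num)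
    exact (h1.differentiableAt (by norm_num)).hasFDerivAt
  have hsymm : ∀ v w, B v w = B w v := by
    intro v w
    exact second_derivative_symmetric_of_eventually
      (Filter.eventually_of_mem hball hdiff) hBd v w
  rw [Asymptotics.isLittleO_iff]
  intro ε εpos
  have hlo : ∀ᶠ z in nhds (0 : E), ‖f' (x₀ + z) - f' x₀ - B z‖ ≤ ε * ‖z‖ := by
    have := hasFDerivAt_iff_isLittleO_nhds_zero.1 hBd
    have := Asymptotics.isLittleO_iff.1 this εpos
    filter_upwards [this] with z hz
    simpa using hz
  obtain ⟨δ, δpos, hδ⟩ := Metric.eventually_nhds_iff_ball.1 hlo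
  set δ' := min δ r with hδ'
  have δ'pos : 0 < δ' := lt_min δpos hr
  filter_upwards [Metric.ball_mem_nhds (0 : E) δ'pos] with h hh
  have hhn : ‖h‖ < δ' := by simpa [mem_ball, dist_eq_norm] using hh
  set φ : E → F := fun z => g (x₀ + z) - f' x₀ z - (2⁻¹ : ℝ) • B z z with hφ
  have key : ∀ z ∈ closedBall (0 : E) ‖h‖,
      HasFDerivWithinAt φ (f' (x₀ + z) - f' x₀ - B z) (closedBall (0 : E) ‖h‖) z := by
    intro z hz
    have hzn : ‖z‖ ≤ ‖h‖ := by simpa [mem_closedBall, dist_eq_norm] using hz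
    have hzr : x₀ + z ∈ ball x₀ r := by
      simp only [mem_ball, dist_eq_norm, add_sub_cancel_left]
      exact lt_of_le_of_lt hzn (lt_of_lt_of_le hhn (min_le_right _ _))
    have h1 : HasFDerivAt (fun z : E => g (x₀ + z)) (f' (x₀ + z)) z := by
      have := (hdiff _ hzr).comp z ((hasFDerivAt_id z).const_add x₀)
      simpa [Function.comp_def] using this
    have h2 : HasFDerivAt (fun z : E => f' x₀ z) (f' x₀) z :=
      (f' x₀).hasFDerivAt
    have h3 : HasFDerivAt (fun z : E => (2⁻¹ : ℝ) • B z z) (B z) z := by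
      have hb : HasFDerivAt (fun p : E × E => B p.1 p.2)
          ((B.isBoundedBilinearMap).deriv (z, z)) (z, z) :=
        (B.isBoundedBilinearMap).hasFDerivAt (z, z)
      have hd : HasFDerivAt (fun z : E => (z, z))
          ((ContinuousLinearMap.id ℝ E).prod (ContinuousLinearMap.id ℝ E)) z :=
        HasFDerivAt.prodMk (hasFDerivAt_id z) (hasFDerivAt_id z)
      have hcomp := HasFDerivAt.comp (g := fun p : E × E => B p.1 p.2)
        (f := fun z : E => (z, z)) z hb hd
      have := hcomp.const_smul (2⁻¹ : ℝ)
      convert this using 1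
      · rfl
      ext k
      simp [ContinuousLinearMap.comp_apply, IsBoundedBilinearMap.deriv_apply,
        hsymm k z, smul_add]
      module
    exact ((h1.sub h2).sub h3).hasFDerivWithinAt
  have bound : ∀ z ∈ closedBall (0 : E) ‖h‖, ‖f' (x₀ + z) - f' x₀ - B z‖ ≤ ε * ‖h‖ := by
    intro z hz
    have hzn : ‖z‖ ≤ ‖h‖ := by simpa [mem_closedBall, dist_eq_norm] using hz
    have : z ∈ ball (0 : E) δ := by
      simp only [mem_ball, dist_eq_norm, sub_zero]
      exact lt_of_le_of_lt hzn (lt_of_lt_of_le hhn (min_le_left _ _))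
    exact le_trans (hδ z this) (mul_le_mul_of_nonneg_left hzn εpos.le)
  have hmem : h ∈ closedBall (0 : E) ‖h‖ := mem_closedBall_iff_norm.2 (by simp)
  have := (convex_closedBall (0 : E) ‖h‖).norm_image_sub_le_of_norm_hasFDerivWithin_le
    key bound (mem_closedBall_self (norm_nonneg h)) hmem
  have hφh : φ h - φ 0 = g (x₀ + h) - g x₀ - f' x₀ h - (2⁻¹ : ℝ) • B h h := by
    simp [hφ]
    abel
  calc ‖g (x₀ + h) - g x₀ - f' x₀ h - (2⁻¹ : ℝ) • B h h‖ = ‖φ h - φ 0‖ := by rw [hφh]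
    _ ≤ ε * ‖h‖ * ‖h - 0‖ := this
    _ = ε * ‖‖h‖ ^ 2‖ := by
        rw [sub_zero]
        rw [norm_pow, norm_norm]
        ring

private lemma rayleigh_bounds' {n : ℕ} {A : Matrix (Fin n) (Fin n) ℝ} (hA : A.IsHermitian)
    (u : EuclideanSpace ℝ (Fin n)) :
    (⨅ i, hA.eigenvalues i) * ‖u‖ ^ 2 ≤ dotProduct u.ofLp (A.mulVec u.ofLp) ∧
      dotProduct u.ofLp (A.mulVec u.ofLp) ≤ (⨆ i, hA.eigenvalues i) * ‖u‖ ^ 2 := by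
  set b := hA.eigenvectorBasis with hb
  set lam := hA.eigenvalues with hlam
  set c : Fin n → ℝ := fun i => inner (𝕜 := ℝ) (b i) u with hc
  set T := Matrix.toEuclideanLin A with hT
  have hdot : dotProduct u.ofLp (A.mulVec u.ofLp) = inner (𝕜 := ℝ) u (T u) := by
    simp only [hT, Matrix.toEuclideanLin_apply, PiLp.inner_apply, RCLike.inner_apply,
      conj_trivial, dotProduct]
    exact Finset.sum_congr rfl fun _ _ => mul_comm _ _
  have hsym : T.IsSymmetric := Matrix.isHermitian_iff_isSymmetric.1 hA
  have hTb : ∀ i, inner (𝕜 := ℝ) (T (b i)) u = lam i * c i := by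
    intro i
    have hmv := hA.mulVec_eigenvectorBasis i
    have hcoord : ∀ j, T (b i) j = lam i * (b i) j := by
      intro j
      have h1 : T (b i) j = (A.mulVec (b i)) j := rfl
      rw [h1]
      have := congrFun hmv j
      simpa using this
    simp only [PiLp.inner_apply, RCLike.inner_apply, conj_trivial, hc]
    rw [Finset.mul_sum]
    refine Finset.sum_congr rfl fun j _ => ?_
    rw [hcoord j]; ring
  have key : inner (𝕜 := ℝ) u (T u) = ∑ i, lam i * (c i) ^ 2 := by
    set v := T u with hv
    have expand : inner (𝕜 := ℝ) u v = ∑ i, c i * inner (𝕜 := ℝ) (b i) v := by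
      conv_lhs => rw [← b.sum_repr' u]
      rw [sum_inner]
      refine Finset.sum_congr rfl fun i _ => ?_
      rw [real_inner_smul_left]
    rw [expand]
    refine Finset.sum_congr rfl fun i _ => ?_
    have : inner (𝕜 := ℝ) (b i) v = inner (𝕜 := ℝ) (T (b i)) u := (hsym (b i) u).symm
    rw [this, hTb i]
    ring
  have hnorm : ‖u‖ ^ 2 = ∑ i, (c i) ^ 2 := by
    have h1 : ‖u‖ = ‖b.repr u‖ := (b.repr.norm_map u).symm
    rw [h1, EuclideanSpace.norm_eq]
    rw [Real.sq_sqrt (by positivity)]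
    refine Finset.sum_congr rfl fun i _ => ?_
    rw [b.repr_apply_apply]
    simp [hc, sq_abs]
  have hbdd : BddBelow (Set.range lam) := (Set.finite_range lam).bddBelow
  have hbdd2 : BddAbove (Set.range lam) := (Set.finite_range lam).bddAbove
  rw [hdot, key, hnorm]
  constructor
  · rw [Finset.mul_sum]
    refine Finset.sum_le_sum fun i _ => ?_
    exact mul_le_mul_of_nonneg_right (ciInf_le hbdd i) (sq_nonneg _)
  · rw [Finset.mul_sum]
    refine Finset.sum_le_sum fun i _ => ?_
    exact mul_le_mul_of_nonneg_right (le_ciSup hbdd2 i) (sq_nonneg _)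

private lemma quad_upper' {n : ℕ} (A : Matrix (Fin n) (Fin n) ℝ) (u : EuclideanSpace ℝ (Fin n)) :
    |dotProduct u.ofLp (A.mulVec u.ofLp)|
      ≤ ‖Matrix.toEuclideanCLM (𝕜 := ℝ) A‖ * ‖u‖ ^ 2 := by
  have hdot : dotProduct u.ofLp (A.mulVec u.ofLp)
      = inner (𝕜 := ℝ) u (Matrix.toEuclideanCLM (𝕜 := ℝ) A u) := by
    have h1 : (Matrix.toEuclideanCLM (𝕜 := ℝ) A) u = Matrix.toEuclideanLin A u := by
      have h := Matrix.coe_toEuclideanCLM_eq_toEuclideanLin (𝕜 := ℝ) (A := A)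
      have := LinearMap.congr_fun h u
      simpa using this
    rw [h1]
    simp only [Matrix.toEuclideanLin_apply, PiLp.inner_apply, RCLike.inner_apply,
      conj_trivial, dotProduct]
    exact Finset.sum_congr rfl fun _ _ => mul_comm _ _
  rw [hdot]
  calc |inner (𝕜 := ℝ) u (Matrix.toEuclideanCLM (𝕜 := ℝ) A u)|
      ≤ ‖u‖ * ‖Matrix.toEuclideanCLM (𝕜 := ℝ) A u‖ := abs_real_inner_le_norm _ _
    _ ≤ ‖u‖ * (‖Matrix.toEuclideanCLM (𝕜 := ℝ) A‖ * ‖u‖) :=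
        mul_le_mul_of_nonneg_left ((Matrix.toEuclideanCLM (𝕜 := ℝ) A).le_opNorm u)
          (norm_nonneg u)
    _ = ‖Matrix.toEuclideanCLM (𝕜 := ℝ) A‖ * ‖u‖ ^ 2 := by ring

private lemma sq_le_case2 {a q s : ℝ} (ha : 0 ≤ a) (hs : 0 ≤ s) (h : a * s ≤ q) :
    a ^ 2 * s ^ 2 ≤ q ^ 2 := by
  have h0 : 0 ≤ a * s := mul_nonneg ha hs
  nlinarith [mul_self_le_mul_self h0 h]

private lemma sq_le_case3 {bb q s : ℝ} (hbb : bb ≤ 0) (hs : 0 ≤ s) (h : q ≤ bb * s) :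
    bb ^ 2 * s ^ 2 ≤ q ^ 2 := by
  have h0 : bb * s ≤ 0 := mul_nonpos_of_nonpos_of_nonneg hbb hs
  nlinarith [mul_self_le_mul_self (neg_nonneg.2 h0) (neg_le_neg h)]

set_option maxHeartbeats 1000000 in
theorem stmt19 (n : ℕ) (g : EuclideanSpace ℝ (Fin n) → EuclideanSpace ℝ (Fin n))
    (xs : EuclideanSpace ℝ (Fin n)) (x : ℕ → EuclideanSpace ℝ (Fin n))
    (r lam : ℝ) (hr : 0 < r)
    (hg : ContDiffOn ℝ 2 g (Metric.ball xs r))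
    (hfix : g xs = xs) (hJ : fderiv ℝ g xs = 0)
    (hxconv : Filter.Tendsto x Filter.atTop (nhds xs))
    (hxne : ∀ k, x k ≠ xs)
    (hit : ∀ k, g (x k) = x (k + 1))
    (hlam : Filter.Tendsto (fun k => ‖x (k + 1) - xs‖ / ‖x k - xs‖ ^ 2)
      Filter.atTop (nhds lam))
    (H : Fin n → Matrix (Fin n) (Fin n) ℝ)
    (hHsymm : ∀ j, (H j).IsHermitian)
    (hHrep : ∀ j, ∀ v w : EuclideanSpace ℝ (Fin n),
      dotProduct v.ofLp ((H j).mulVec w.ofLp)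
        = iteratedFDeriv ℝ 2 (fun z => g z j) xs ![v, w])
    (μ : EuclideanSpace ℝ (Fin n))
    (hμ : ∀ j, μ j =
      if (⨅ i, (hHsymm j).eigenvalues i) < 0 ∧ 0 < (⨆ i, (hHsymm j).eigenvalues i)
        then 0
      else if 0 ≤ ⨅ i, (hHsymm j).eigenvalues i
        then ⨅ i, (hHsymm j).eigenvalues i
      else |⨆ i, (hHsymm j).eigenvalues i|) :
    (1 / 2) * ‖μ‖ ≤ lam ∧
    lam ≤ (1 / 2) * Real.sqrt
      (∑ j : Fin n, ‖Matrix.toEuclideanCLM (𝕜 := ℝ) (H j)‖ ^ 2) := by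
  classical
  set B := fderiv ℝ (fderiv ℝ g) xs with hB
  have hxball : xs ∈ ball xs r := mem_ball_self hr
  -- the Hessian matrices represent the second derivative
  have hquad : ∀ j (v w : EuclideanSpace ℝ (Fin n)),
      dotProduct v.ofLp ((H j).mulVec w.ofLp) = (B v w) j := by
    intro j v w
    rw [hHrep j v w]
    have hfun : (fun z => g z j) = (EuclideanSpace.proj j (𝕜 := ℝ)) ∘ g := rfl
    rw [hfun]
    have e1 : iteratedFDeriv ℝ 2 ((EuclideanSpace.proj j (𝕜 := ℝ)) ∘ g) xs
        = iteratedFDerivWithin ℝ 2 ((EuclideanSpace.proj j (𝕜 := ℝ)) ∘ g) (ball xs r) xs :=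
      (iteratedFDerivWithin_of_isOpen 2 isOpen_ball hxball).symm
    rw [e1]
    rw [(EuclideanSpace.proj j (𝕜 := ℝ)).iteratedFDerivWithin_comp_left (hg.contDiffWithinAt hxball)
      isOpen_ball.uniqueDiffOn hxball le_rfl]
    rw [ContinuousLinearMap.compContinuousMultilinearMap_coe]
    simp only [Function.comp_apply]
    rw [iteratedFDerivWithin_of_isOpen 2 isOpen_ball hxball]
    rw [iteratedFDeriv_two_apply]
    simp [hB]
  have hQj : ∀ (h : EuclideanSpace ℝ (Fin n)) j,
      ((2⁻¹ : ℝ) • B h h) j = 2⁻¹ * dotProduct h.ofLp ((H j).mulVec h.ofLp) := by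
    intro h j
    rw [hquad]
    simp [PiLp.smul_apply, smul_eq_mul]
  -- Taylor expansion
  have TT : (fun h : EuclideanSpace ℝ (Fin n) =>
      g (xs + h) - xs - (2⁻¹ : ℝ) • B h h) =o[nhds 0] (fun h => ‖h‖ ^ 2) := by
    have := taylor2' hr hg
    rw [hJ] at this
    simpa [hfix, hB] using this
  -- squared norm identities
  have hnormsq : ∀ (v : EuclideanSpace ℝ (Fin n)), ‖v‖ ^ 2 = ∑ j, (v j) ^ 2 := by
    intro v
    rw [EuclideanSpace.norm_eq, Real.sq_sqrt (by positivity)]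
    exact Finset.sum_congr rfl fun j _ => by rw [Real.norm_eq_abs, sq_abs]
  -- pointwise lower bound
  have hlow : ∀ h : EuclideanSpace ℝ (Fin n), ‖μ‖ * ‖h‖ ^ 2 ≤ 2 * ‖(2⁻¹ : ℝ) • B h h‖ := by
    intro h
    have perj : ∀ j, μ j ^ 2 * (‖h‖ ^ 2) ^ 2
        ≤ (dotProduct h.ofLp ((H j).mulVec h.ofLp)) ^ 2 := by
      intro j
      obtain ⟨hlo, hup⟩ := rayleigh_bounds' (hHsymm j) h
      set a := ⨅ i, (hHsymm j).eigenvalues i with ha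
      set bb := ⨆ i, (hHsymm j).eigenvalues i with hbb
      set q := dotProduct h.ofLp ((H j).mulVec h.ofLp) with hqd
      have hs : (0:ℝ) ≤ ‖h‖ ^ 2 := sq_nonneg _
      rw [hμ j]
      split_ifs with h1 h2
      · simpa using sq_nonneg q
      · exact sq_le_case2 h2 hs hlo
      · have ha' : a < 0 := lt_of_not_ge h2
        have hbb' : bb ≤ 0 := by
          by_contra hcon
          exact h1 ⟨ha', lt_of_not_ge hcon⟩
        rw [sq_abs]
        exact sq_le_case3 hbb' hs hup
    have h1 : (‖μ‖ * ‖h‖ ^ 2) ^ 2 ≤ (2 * ‖(2⁻¹ : ℝ) • B h h‖) ^ 2 := by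
      calc (‖μ‖ * ‖h‖ ^ 2) ^ 2 = ∑ j, μ j ^ 2 * (‖h‖ ^ 2) ^ 2 := by
            rw [mul_pow, hnormsq μ, Finset.sum_mul]
        _ ≤ ∑ j, (dotProduct h.ofLp ((H j).mulVec h.ofLp)) ^ 2 :=
            Finset.sum_le_sum fun j _ => perj j
        _ = (2 * ‖(2⁻¹ : ℝ) • B h h‖) ^ 2 := by
            rw [mul_pow, hnormsq ((2⁻¹ : ℝ) • B h h), Finset.mul_sum]
            refine Finset.sum_congr rfl fun j _ => ?_
            rw [hQj h j]; ring
    have := Real.sqrt_le_sqrt h1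
    rwa [Real.sqrt_sq (by positivity), Real.sqrt_sq (by positivity)] at this
  -- pointwise upper bound
  have hupp : ∀ h : EuclideanSpace ℝ (Fin n), 2 * ‖(2⁻¹ : ℝ) • B h h‖
      ≤ Real.sqrt (∑ j, ‖Matrix.toEuclideanCLM (𝕜 := ℝ) (H j)‖ ^ 2) * ‖h‖ ^ 2 := by
    intro h
    have h1 : (2 * ‖(2⁻¹ : ℝ) • B h h‖) ^ 2
        ≤ (Real.sqrt (∑ j, ‖Matrix.toEuclideanCLM (𝕜 := ℝ) (H j)‖ ^ 2) * ‖h‖ ^ 2) ^ 2 := by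
      calc (2 * ‖(2⁻¹ : ℝ) • B h h‖) ^ 2
          = ∑ j, (dotProduct h.ofLp ((H j).mulVec h.ofLp)) ^ 2 := by
            rw [mul_pow, hnormsq ((2⁻¹ : ℝ) • B h h), Finset.mul_sum]
            refine Finset.sum_congr rfl fun j _ => ?_
            rw [hQj h j]; ring
        _ ≤ ∑ j, (‖Matrix.toEuclideanCLM (𝕜 := ℝ) (H j)‖ * ‖h‖ ^ 2) ^ 2 := by
            refine Finset.sum_le_sum fun j _ => ?_
            have := quad_upper' (H j) h
            calc (dotProduct h.ofLp ((H j).mulVec h.ofLp)) ^ 2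
                = |dotProduct h.ofLp ((H j).mulVec h.ofLp)| ^ 2 := (sq_abs _).symm
              _ ≤ (‖Matrix.toEuclideanCLM (𝕜 := ℝ) (H j)‖ * ‖h‖ ^ 2) ^ 2 :=
                  pow_le_pow_left₀ (abs_nonneg _) this 2
        _ = (Real.sqrt (∑ j, ‖Matrix.toEuclideanCLM (𝕜 := ℝ) (H j)‖ ^ 2) * ‖h‖ ^ 2) ^ 2 := by
            rw [mul_pow, Real.sq_sqrt (by positivity), Finset.sum_mul]
            exact Finset.sum_congr rfl fun j _ => by ring
    have := Real.sqrt_le_sqrt h1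
    rwa [Real.sqrt_sq (by positivity), Real.sqrt_sq (by positivity)] at this
  -- sequence analysis
  have hd0 : ∀ k, x k - xs ≠ 0 := fun k => sub_ne_zero.2 (hxne k)
  have hdpos : ∀ k, (0:ℝ) < ‖x k - xs‖ ^ 2 :=
    fun k => pow_pos (norm_pos_iff.2 (hd0 k)) 2
  have htd : Tendsto (fun k => x k - xs) atTop (nhds 0) := by
    have := hxconv.sub (tendsto_const_nhds (x := xs))
    simpa using this
  have hO := TT.comp_tendsto htd
  have hO' : (fun k => x (k+1) - xs - (2⁻¹ : ℝ) • B (x k - xs) (x k - xs))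
      =o[atTop] (fun k => ‖x k - xs‖ ^ 2) := by
    have heq : ∀ k, g (xs + (x k - xs)) = x (k+1) := by
      intro k
      rw [add_sub_cancel]
      exact hit k
    refine hO.congr' ?_ ?_
    · filter_upwards with k
      simp only [Function.comp_apply]
      rw [heq k]
    · filter_upwards with k
      rfl
  have hz : Tendsto (fun k => ‖x (k+1) - xs - (2⁻¹ : ℝ) • B (x k - xs) (x k - xs)‖
      / ‖x k - xs‖ ^ 2) atTop (nhds 0) :=
    (hO'.norm_left).tendsto_div_nhds_zero
  have hdiff0 : Tendsto (fun k => ‖x (k+1) - xs‖ / ‖x k - xs‖ ^ 2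
      - ‖(2⁻¹ : ℝ) • B (x k - xs) (x k - xs)‖ / ‖x k - xs‖ ^ 2) atTop (nhds 0) := by
    apply squeeze_zero_norm (fun k => ?_) hz
    rw [div_sub_div_same, Real.norm_eq_abs, abs_div, abs_of_pos (hdpos k)]
    gcongr
    exact abs_norm_sub_norm_le _ _
  have hq : Tendsto (fun k => ‖(2⁻¹ : ℝ) • B (x k - xs) (x k - xs)‖ / ‖x k - xs‖ ^ 2)
      atTop (nhds lam) := by
    have := hlam.sub hdiff0
    simpa using this
  constructor
  · refine ge_of_tendsto' hq fun k => ?_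
    rw [le_div_iff₀ (hdpos k)]
    have := hlow (x k - xs)
    linarith
  · refine le_of_tendsto' hq fun k => ?_
    rw [div_le_iff₀ (hdpos k)]
    have := hupp (x k - xs)
    linarith
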